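/- Let S be a fold string and set z = f(θ_S(a)). Then, as subsets of ℂ: i·K[θ_S(a)] = K[θ_S(d)] + iz, (−1)·K[θ_S(a)] = K[θ_S(c)], and (−i)·K[θ_S(a)] = K[θ_S(b)] − iz. -/

import Mathlib

open scoped Classical

/-- Letters of the folding alphabet {D, U}. -/
inductive FoldLetter : Type
  | D : FoldLetter
  | U : FoldLetter
deriving DecidableEq

/-- Words over {D, U}. -/
abbrev FWord := List FoldLetter

/-- The letter morphism μ swapping D and U. -/
def mir : FoldLetter → FoldLetter
  | .D => .U
  | .U => .D

/-- S̄ = μ(τ(S)): reverse the word and swap D and U. -/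
def fbar (S : FWord) : FWord := (S.reverse).map mir

/-- The folding convolution S * T. -/
def conv (S : FWord) : FWord → FWord
  | [] => S
  | b :: T => S ++ b :: conv (fbar S) T

/-- A fold string: a nonempty word over {D,U} starting with D. -/
def IsFoldString (S : FWord) : Prop := S ≠ [] ∧ S.head? = some FoldLetter.D

/-- The alphabet A = {a,b,c,d}, encoded as ZMod 4 (a = 0, b = 1, c = 2, d = 3),
so that σ is addition of 1 and f is k ↦ i^k. -/
abbrev Alpha := ZMod 4

/-- Words over A. -/
abbrev AWord := List Alpha

/-- w(D) = 1, w(U) = -1. -/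
def wInt : FoldLetter → ℤ
  | .D => 1
  | .U => -1

/-- The homomorphism w on words. -/
def wSum (S : FWord) : ℤ := (S.map wInt).sum

/-- θ_S(a) = e₀ e₁ ⋯ e_{m-1} with e₀ = a and e_i = σ^{w(a₁⋯a_i)}(a). -/
def thetaA (S : FWord) : AWord :=
  (List.range (S.length + 1)).map (fun i => ((wSum (S.take i) : ℤ) : Alpha))

/-- The word operation στ (reverse, then cyclically shift each letter). -/
def st (v : AWord) : AWord := v.reverse.map (· + 1)

/-- θ_S on a letter: θ_S(σ^k(a)) = (στ)^k (θ_S(a)). -/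
def thetaL (S : FWord) (e : Alpha) : AWord := st^[e.val] (thetaA S)

/-- The folding morphism θ_S as a monoid endomorphism of A*. -/
def theta (S : FWord) (v : AWord) : AWord := v.flatMap (thetaL S)

/-- f on letters: f(a) = 1, f(b) = i, f(c) = -1, f(d) = -i. -/
noncomputable def fL : Alpha → ℂ := fun e => Complex.I ^ e.val

/-- The homomorphism f : A* → (ℂ, +). -/
noncomputable def fW (v : AWord) : ℂ := (v.map fL).sum

/-- The k-th point z_k of the curve of a word v. -/
noncomputable def pt (v : AWord) (k : ℕ) : ℂ := fW (v.take k)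

/-- The curve of v traverses a segment twice. -/
def TraversesTwice (v : AWord) : Prop :=
  ∃ k l, k < v.length ∧ l < v.length ∧ k ≠ l ∧
    ({pt v k, pt v (k + 1)} : Set ℂ) = ({pt v l, pt v (l + 1)} : Set ℂ)

/-- The fold string S is self-avoiding. -/
def SelfAvoiding (S : FWord) : Prop :=
  ∀ n : ℕ, 1 ≤ n → ¬ TraversesTwice ((theta S)^[n] [0])

/-- z ∈ ℂ is a Gaussian integer. -/
def IsGaussianInt (z : ℂ) : Prop := ∃ p q : ℤ, z = (p : ℂ) + (q : ℂ) * Complex.I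

/-- The number of indices k ∈ {0, …, |v|} with z_k = z (occurrences of z among
the points of the curve of v). -/
noncomputable def countAt (v : AWord) (z : ℂ) : ℕ :=
  ((Finset.range (v.length + 1)).filter (fun k => pt v k = z)).card

/-- The fold string S is planefilling. -/
def Planefilling (S : FWord) : Prop :=
  ∀ R : ℝ, 0 < R → ∃ n : ℕ, 1 ≤ n ∧ ∃ q : ℂ, IsGaussianInt q ∧
    ∀ z : ℂ, IsGaussianInt z → ‖z - q‖ ≤ R →
      2 ≤ countAt ((theta S)^[n] [0]) z

/-- The word θ_S(abcd), whose curve is the θ-loop of S. -/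
def loopWord (S : FWord) : AWord := theta S [0, 1, 2, 3]

/-- The rounding of the closed curve of a word v (all of whose steps are unit
segments and with f(v) = 0), as a subset of ℂ. -/
noncomputable def roundedCurve (v : AWord) : Set ℂ :=
  ⋃ k ∈ Finset.range v.length,
    (segment ℝ (pt v k + (pt v (k + 1) - pt v k) / 4)
        (pt v (k + 1) - (pt v (k + 1) - pt v k) / 4) ∪
      segment ℝ (pt v (k + 1) - (pt v (k + 1) - pt v k) / 4)
        (pt v ((k + 1) % v.length) +
          (pt v ((k + 1) % v.length + 1) - pt v ((k + 1) % v.length)) / 4))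

/-- The number of indices k ∈ {0, …, |v| - 1} with z_k = z (occurrences of z among
the vertices of the closed curve of v). -/
noncomputable def vertexCount (v : AWord) (z : ℂ) : ℕ :=
  ((Finset.range v.length).filter (fun k => pt v k = z)).card

/-- The closed curve of v is maximally simple: it is simple, and every Gaussian
integer lying in a bounded connected component of the complement of its rounding
occurs exactly twice among its vertices. -/
def MaximallySimple (v : AWord) : Prop :=
  ¬ TraversesTwice v ∧
    ∀ z : ℂ, IsGaussianInt z → z ∉ roundedCurve v →
      Bornology.IsBounded (connectedComponentIn (roundedCurve v)ᶜ z) →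
      vertexCount v z = 2

/-- A D-word: letters from {a,c} (even) and {b,d} (odd) alternate. -/
def IsDWord (v : AWord) : Prop :=
  ∀ k (h : k + 1 < v.length),
    (v[k]'(Nat.lt_of_succ_lt h)).val % 2 ≠ (v[k + 1]'h).val % 2

/-- A loop word: a nonempty D-word with f(v) = 0. -/
def IsLoopWord (v : AWord) : Prop := v ≠ [] ∧ IsDWord v ∧ fW v = 0

/-- The eight square words σᵏ(abcd), σᵏ(adcb), k = 0,1,2,3. -/
def squareWords : List AWord :=
  [[0, 1, 2, 3], [1, 2, 3, 0], [2, 3, 0, 1], [3, 0, 1, 2],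
   [0, 3, 2, 1], [1, 0, 3, 2], [2, 1, 0, 3], [3, 2, 1, 0]]

/-- K[v] ⊆ ℂ: the union of the segments of the curve of v. -/
noncomputable def KSet (v : AWord) : Set ℂ :=
  ⋃ k ∈ Finset.range v.length, segment ℝ (pt v k) (pt v (k + 1))

/-- The number of boundary points of S: Gaussian integers visited exactly once
by the curve of θ_S(a). -/
noncomputable def rCount (S : FWord) : ℕ :=
  ((Finset.range ((thetaA S).length + 1)).filter
    (fun k => countAt (thetaA S) (pt (thetaA S) k) = 1)).card

/-- The k-th point Z_k of the infinite curve of S. -/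
noncomputable def Zpt (S : FWord) (k : ℕ) : ℂ := pt ((theta S)^[k] [0]) k

/-- The fold string S is perfect. -/
def IsPerfectFold (S : FWord) : Prop :=
  SelfAvoiding S ∧
    ∀ p q : ℂ, IsGaussianInt p → IsGaussianInt q → ‖p - q‖ = 1 →
      ∃! jk : Fin 4 × ℕ,
        ({Complex.I ^ (jk.1 : ℕ) * Zpt S jk.2,
          Complex.I ^ (jk.1 : ℕ) * Zpt S (jk.2 + 1)} : Set ℂ) = ({p, q} : Set ℂ)

/-! The curve of `στ v` is the curve of `v` run backwards, rotated by `-i` and translated by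
`i f(v)`. Since `θ_S(σᵏ a) = (στ)ᵏ θ_S(a)`, composing this one, two and three times (and
using `f(στ v) = i f(v)`) gives the three identities. -/

lemma fL_add_one (e : Alpha) : fL (e + 1) = Complex.I * fL e := by
  rw [fL, fL, ← pow_succ', Complex.I_pow_eq_pow_mod (e.val + 1), ZMod.val_add,
    ZMod.val_one_eq_one_mod]

lemma fW_map_add_one (v : AWord) : fW (v.map (· + 1)) = Complex.I * fW v := by
  induction v with
  | nil => simp [fW]
  | cons e v ih =>
    simp only [fW, List.map_cons, List.sum_cons] at ih ⊢
    rw [fL_add_one, ih, mul_add]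

lemma fW_reverse (v : AWord) : fW v.reverse = fW v := by
  simp [fW, List.map_reverse, List.sum_reverse]

lemma fW_st (v : AWord) : fW (st v) = Complex.I * fW v := by
  rw [st, fW_map_add_one, fW_reverse]

lemma pt_st (v : AWord) (k : ℕ) :
    pt (st v) k = -Complex.I * pt v (v.length - k) + Complex.I * fW v := by
  have hsplit : fW v = fW (v.take (v.length - k)) + fW (v.drop (v.length - k)) := by
    conv_lhs => rw [← List.take_append_drop (v.length - k) v]
    simp [fW]
  rw [pt, pt, st, ← List.map_take, fW_map_add_one, List.take_reverse, fW_reverse, hsplit]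
  ring

lemma image_segment_mul_add (c d a b : ℂ) :
    (fun x : ℂ => c * x + d) '' segment ℝ a b = segment ℝ (c * a + d) (c * b + d) :=
  image_segment ℝ ((LinearMap.mulLeft ℝ c).toAffineMap + AffineMap.const ℝ ℂ d) a b

lemma biUnion_range_reflect {α : Type*} (n : ℕ) (F : ℕ → Set α) :
    ⋃ k ∈ Finset.range n, F (n - 1 - k) = ⋃ k ∈ Finset.range n, F k := by
  ext x
  simp only [Set.mem_iUnion, Finset.mem_range]
  constructor
  · rintro ⟨k, hk, hx⟩
    exact ⟨n - 1 - k, by omega, hx⟩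
  · rintro ⟨k, hk, hx⟩
    exact ⟨n - 1 - k, by omega, by rwa [show n - 1 - (n - 1 - k) = k by omega]⟩

lemma KSet_st (v : AWord) :
    KSet (st v) = (fun x : ℂ => -Complex.I * x + Complex.I * fW v) '' KSet v := by
  have hlen : (st v).length = v.length := by simp [st]
  rw [KSet, KSet, hlen, Set.image_iUnion₂, ← biUnion_range_reflect]
  refine Set.iUnion₂_congr fun k hk => ?_
  rw [Finset.mem_range] at hk
  rw [image_segment_mul_add, segment_symm, pt_st, pt_st,
    show v.length - (v.length - 1 - k + 1) = k by omega,
    show v.length - (v.length - 1 - k) = k + 1 by omega]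

lemma theta_singleton (S : FWord) (e : Alpha) : theta S [e] = st^[e.val] (thetaA S) := by
  simp [theta, thetaL]

theorem rotate_KSet_general (S : FWord) :
    (fun x : ℂ => Complex.I * x) '' KSet (theta S [0]) =
        (fun x : ℂ => x + Complex.I * fW (thetaA S)) '' KSet (theta S [3]) ∧
    (fun x : ℂ => (-1 : ℂ) * x) '' KSet (theta S [0]) = KSet (theta S [2]) ∧
    (fun x : ℂ => -Complex.I * x) '' KSet (theta S [0]) =
        (fun x : ℂ => x - Complex.I * fW (thetaA S)) '' KSet (theta S [1]) := by
  simp only [theta_singleton]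
  change _ '' KSet (thetaA S) = _ '' KSet (st (st (st (thetaA S)))) ∧
    _ '' KSet (thetaA S) = KSet (st (st (thetaA S))) ∧
    _ '' KSet (thetaA S) = _ '' KSet (st (thetaA S))
  simp only [KSet_st, fW_st, Set.image_image]
  refine ⟨Set.image_congr fun x _ => ?_, Set.image_congr fun x _ => ?_,
    Set.image_congr fun x _ => ?_⟩
  · linear_combination Complex.I * (x - fW (thetaA S)) * Complex.I_sq
  · linear_combination -x * Complex.I_sq
  · ring

/-- i·K[θ_S(a)] = K[θ_S(d)] + iz, (−1)·K[θ_S(a)] = K[θ_S(c)],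
and (−i)·K[θ_S(a)] = K[θ_S(b)] − iz, where z = f(θ_S(a)). -/
theorem rotate_KSet (S : FWord) (hS : IsFoldString S) :
    (fun x : ℂ => Complex.I * x) '' KSet (theta S [0]) =
        (fun x : ℂ => x + Complex.I * fW (thetaA S)) '' KSet (theta S [3]) ∧
    (fun x : ℂ => (-1 : ℂ) * x) '' KSet (theta S [0]) = KSet (theta S [2]) ∧
    (fun x : ℂ => -Complex.I * x) '' KSet (theta S [0]) =
        (fun x : ℂ => x - Complex.I * fW (thetaA S)) '' KSet (theta S [1]) :=
  rotate_KSet_general S
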